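/- arXiv:1302.3201 — 2 statements merged into one kernel-verified Lean document; each statement's English description precedes it below -/
import Mathlib

section
/- There exists a z-filter 𝒜 on Lmc(ℝ,+) such that E(E⁻(𝒜)) is properly contained in 𝒜. Concretely, for the maximal ideal M₀ = {f ∈ Lmc(ℝ) : f(0) = 0}, the z-filter 𝒜 = {Z(f) : f ∈ M₀} satisfies {0} ∈ 𝒜 but {0} ∉ E(E⁻(𝒜)). -/
open scoped BoundedContinuousFunction
open WeakDual

/-- A semitopological semigroup: multiplication is separately continuous. -/
class SemitopologicalSemigroup (S : Type*) [TopologicalSpace S] [Mul S] : Prop where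
  continuous_mul_left : ∀ s : S, Continuous fun x : S => s * x
  continuous_mul_right : ∀ s : S, Continuous fun x : S => x * s

/-- Left translate `L_s f (x) = f (s x)` as a bounded continuous function. -/
noncomputable def lTrans {S : Type*} [TopologicalSpace S] [Mul S] [SemitopologicalSemigroup S]
    (s : S) (f : S →ᵇ ℂ) : S →ᵇ ℂ :=
  f.compContinuous ⟨fun x => s * x, SemitopologicalSemigroup.continuous_mul_left s⟩

/-- The left multiplicatively continuous functions: `f ∈ Lmc S` iff `T_μ f` is (bounded)
continuous for every character `μ` of `CB(S) = S →ᵇ ℂ` (i.e. every `μ ∈ βS`). -/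
def Lmc (S : Type*) [TopologicalSpace S] [Mul S] [SemitopologicalSemigroup S] :
    Set (S →ᵇ ℂ) :=
  {f | ∀ μ : characterSpace ℂ (S →ᵇ ℂ), Continuous fun s : S => (μ (lTrans s f) : ℂ)}

/-- `E_ε(f) = {x ∈ S : |f x| ≤ ε}`. -/
def Eset {S : Type*} [TopologicalSpace S] (ε : ℝ) (f : S →ᵇ ℂ) : Set S :=
  {x : S | ‖f x‖ ≤ ε}

/-- A zero set of `Lmc S`: `Z(f) = f⁻¹({0})` for some `f ∈ Lmc S`. -/
def IsZeroSet {S : Type*} [TopologicalSpace S] [Mul S] [SemitopologicalSemigroup S]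
    (A : Set S) : Prop :=
  ∃ f ∈ Lmc S, A = {x : S | f x = 0}

/-- `E(I) = {E_ε(f) : f ∈ I, ε > 0}`. -/
def Efam {S : Type*} [TopologicalSpace S] [Mul S] [SemitopologicalSemigroup S]
    (I : Set (S →ᵇ ℂ)) : Set (Set S) :=
  {A | ∃ f ∈ I, ∃ ε : ℝ, 0 < ε ∧ A = Eset ε f}

/-- `E⁻(𝒜) = {f ∈ Lmc S : E_ε(f) ∈ 𝒜 for all ε > 0}`. -/
def Einv {S : Type*} [TopologicalSpace S] [Mul S] [SemitopologicalSemigroup S]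
    (𝒜 : Set (Set S)) : Set (S →ᵇ ℂ) :=
  {f | f ∈ Lmc S ∧ ∀ ε : ℝ, 0 < ε → Eset ε f ∈ 𝒜}

/-- A `z`-filter on `Lmc S`. -/
structure IsZFilter {S : Type*} [TopologicalSpace S] [Mul S] [SemitopologicalSemigroup S]
    (𝒜 : Set (Set S)) : Prop where
  zero_sets : ∀ A ∈ 𝒜, IsZeroSet A
  not_empty_mem : ∅ ∉ 𝒜
  univ_mem : Set.univ ∈ 𝒜
  inter_mem : ∀ A ∈ 𝒜, ∀ B ∈ 𝒜, A ∩ B ∈ 𝒜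
  superset_mem : ∀ A ∈ 𝒜, ∀ B : Set S, IsZeroSet B → A ⊆ B → B ∈ 𝒜

/-- An ideal of the algebra `Lmc S`. -/
structure IsIdealLmc {S : Type*} [TopologicalSpace S] [Mul S] [SemitopologicalSemigroup S]
    (I : Set (S →ᵇ ℂ)) : Prop where
  subset_lmc : I ⊆ Lmc S
  zero_mem : (0 : S →ᵇ ℂ) ∈ I
  add_mem : ∀ f ∈ I, ∀ g ∈ I, f + g ∈ I
  mul_mem : ∀ f ∈ Lmc S, ∀ g ∈ I, f * g ∈ I

/-- A maximal (proper) ideal of `Lmc S`. -/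
def IsMaximalIdealLmc {S : Type*} [TopologicalSpace S] [Mul S] [SemitopologicalSemigroup S]
    (M : Set (S →ᵇ ℂ)) : Prop :=
  IsIdealLmc M ∧ M ≠ Lmc S ∧ ∀ J, IsIdealLmc J → J ≠ Lmc S → M ⊆ J → J = M

/-- An `e`-filter: a `z`-filter with `E(E⁻(𝒜)) = 𝒜`. -/
def IsEFilter {S : Type*} [TopologicalSpace S] [Mul S] [SemitopologicalSemigroup S]
    (𝒜 : Set (Set S)) : Prop :=
  IsZFilter 𝒜 ∧ Efam (Einv 𝒜) = 𝒜

/-- An `e`-ideal: an ideal with `E⁻(E(I)) = I`. -/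
def IsEIdeal {S : Type*} [TopologicalSpace S] [Mul S] [SemitopologicalSemigroup S]
    (I : Set (S →ᵇ ℂ)) : Prop :=
  IsIdealLmc I ∧ Einv (Efam I) = I

/-- An `e`-ultrafilter: a maximal `e`-filter. -/
def IsEUltrafilter {S : Type*} [TopologicalSpace S] [Mul S] [SemitopologicalSemigroup S]
    (p : Set (Set S)) : Prop :=
  IsEFilter p ∧ ∀ q, IsEFilter q → p ⊆ q → q = p

/-- The sum `p + q` of two families of zero sets: `A ∈ p + q` iff `A = E_ε(f)` for some `ε > 0`,
`f ∈ Lmc S`, with `E_δ(q, f) = {x : λ_x⁻¹(E_δ(f)) ∈ q} ∈ p` for all `δ > 0`. -/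
def eAdd {S : Type*} [TopologicalSpace S] [Mul S] [SemitopologicalSemigroup S]
    (p q : Set (Set S)) : Set (Set S) :=
  {A | ∃ ε : ℝ, 0 < ε ∧ ∃ f ∈ Lmc S, A = Eset ε f ∧
    ∀ δ : ℝ, 0 < δ → {x : S | (fun t => x * t) ⁻¹' Eset δ f ∈ q} ∈ p}

/-- The principal `e`-ultrafilter `e(a) = {E_ε(f) : f ∈ Lmc S, f a = 0, ε > 0}`. -/
def ePrinc {S : Type*} [TopologicalSpace S] [Mul S] [SemitopologicalSemigroup S]
    (a : S) : Set (Set S) :=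
  {A | ∃ f ∈ Lmc S, f a = 0 ∧ ∃ ε : ℝ, 0 < ε ∧ A = Eset ε f}

instance : SemitopologicalSemigroup (Multiplicative ℝ) :=
  ⟨fun s => continuous_mul_left s, fun s => continuous_mul_right s⟩

/-- The maximal ideal `M₀ = {f ∈ Lmc(ℝ,+) : f(0) = 0}` (the identity of `(ℝ,+)` is
`(1 : Multiplicative ℝ)`). -/
def M₀ : Set (Multiplicative ℝ →ᵇ ℂ) :=
  {f | f ∈ Lmc (Multiplicative ℝ) ∧ f (1 : Multiplicative ℝ) = 0}

/-- The `z`-filter `𝒜 = {Z(f) : f ∈ M₀}`. -/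
def zFilterA : Set (Set (Multiplicative ℝ)) :=
  {A | ∃ f ∈ M₀, A = {x : Multiplicative ℝ | f x = 0}}

/-!
`M₀` is the kernel of evaluation at the identity, so it is a maximal ideal and its zero sets form
a `z`-filter. The function `x ↦ min |x| 1` is Lipschitz, hence lies in `Lmc(ℝ)`, and vanishes only
at `0`, so `{0} ∈ 𝒜`. On the other hand, if `f ∈ E⁻(𝒜)` then `f(0) = 0`, so by continuity every
`E_ε(f)` is a neighbourhood of `0` and cannot be `{0}`.
-/

open BoundedContinuousFunction Topology

section LeftTranslation

variable {S : Type*} [TopologicalSpace S] [Mul S] [SemitopologicalSemigroup S]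

@[simp]
lemma lTrans_apply (s : S) (f : S →ᵇ ℂ) (x : S) : lTrans s f x = f (s * x) := rfl

@[simp]
lemma lTrans_add (s : S) (f g : S →ᵇ ℂ) : lTrans s (f + g) = lTrans s f + lTrans s g := rfl

@[simp]
lemma lTrans_mul (s : S) (f g : S →ᵇ ℂ) : lTrans s (f * g) = lTrans s f * lTrans s g := rfl

@[simp]
lemma lTrans_star (s : S) (f : S →ᵇ ℂ) : lTrans s (star f) = star (lTrans s f) := rfl

@[simp]
lemma lTrans_const (s : S) (c : ℂ) : lTrans s (const S c) = const S c := rfl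

omit [Mul S] [SemitopologicalSemigroup S] in
@[simp]
lemma characterSpace_apply_const (μ : characterSpace ℂ (S →ᵇ ℂ)) (c : ℂ) : μ (const S c) = c := by
  rw [show const S c = c • (1 : S →ᵇ ℂ) by ext; simp, map_smul, map_one, smul_eq_mul, mul_one]

lemma mem_Lmc_of_continuous_lTrans {f : S →ᵇ ℂ} (hf : Continuous fun s : S => lTrans s f) :
    f ∈ Lmc S :=
  fun μ => (map_continuous μ).comp hf

namespace Lmc

lemma const_mem (c : ℂ) : const S c ∈ Lmc S := fun μ => by
  simpa only [lTrans_const, characterSpace_apply_const] using continuous_const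

lemma zero_mem : (0 : S →ᵇ ℂ) ∈ Lmc S :=
  const_mem 0

lemma add_mem {f g : S →ᵇ ℂ} (hf : f ∈ Lmc S) (hg : g ∈ Lmc S) : f + g ∈ Lmc S := fun μ => by
  simp only [lTrans_add, map_add]
  exact (hf μ).add (hg μ)

lemma mul_mem {f g : S →ᵇ ℂ} (hf : f ∈ Lmc S) (hg : g ∈ Lmc S) : f * g ∈ Lmc S := fun μ => by
  simp only [lTrans_mul, map_mul]
  exact (hf μ).mul (hg μ)

lemma star_mem {f : S →ᵇ ℂ} (hf : f ∈ Lmc S) : star f ∈ Lmc S := fun μ => by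
  simpa only [lTrans_star, map_star] using (hf μ).star

end Lmc

end LeftTranslation

section VanishingIdeal

variable {S : Type*} [TopologicalSpace S] [Mul S] [SemitopologicalSemigroup S]

def vanishingIdealLmc (a : S) : Set (S →ᵇ ℂ) :=
  {f | f ∈ Lmc S ∧ f a = 0}

def zeroSetFamily (I : Set (S →ᵇ ℂ)) : Set (Set S) :=
  {A | ∃ f ∈ I, A = {x : S | f x = 0}}

lemma isIdealLmc_vanishingIdealLmc (a : S) : IsIdealLmc (vanishingIdealLmc a) where
  subset_lmc _ hf := hf.1
  zero_mem := ⟨Lmc.zero_mem, rfl⟩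
  add_mem _ hf _ hg := ⟨Lmc.add_mem hf.1 hg.1, by simp [hf.2, hg.2]⟩
  mul_mem _ hf _ hg := ⟨Lmc.mul_mem hf hg.1, by simp [hg.2]⟩

lemma IsIdealLmc.eq_Lmc_of_const_mem {J : Set (S →ᵇ ℂ)} (hJ : IsIdealLmc J) {c : ℂ} (hc : c ≠ 0)
    (hcJ : const S c ∈ J) : J = Lmc S := by
  refine hJ.subset_lmc.antisymm fun h hh => ?_
  have hunit : h * const S c⁻¹ * const S c = h := by
    ext x
    simp [hc]
  exact hunit ▸ hJ.mul_mem _ (Lmc.mul_mem hh (Lmc.const_mem _)) _ hcJ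

lemma IsIdealLmc.subset_vanishingIdealLmc {J : Set (S →ᵇ ℂ)} (hJ : IsIdealLmc J)
    (hJne : J ≠ Lmc S) {a : S} (haJ : vanishingIdealLmc a ⊆ J) : J ⊆ vanishingIdealLmc a := by
  intro f hf
  refine ⟨hJ.subset_lmc hf, by_contra fun hfa => hJne (hJ.eq_Lmc_of_const_mem hfa ?_)⟩
  have hfL := hJ.subset_lmc hf
  have hshift : f + const S (-f a) ∈ J :=
    haJ ⟨Lmc.add_mem hfL (Lmc.const_mem _), by simp⟩
  have hconst : f + const S (-1) * (f + const S (-f a)) = const S (f a) := by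
    ext x
    simp
  exact hconst ▸ hJ.add_mem _ hf _ (hJ.mul_mem _ (Lmc.const_mem _) _ hshift)

lemma isMaximalIdealLmc_vanishingIdealLmc (a : S) : IsMaximalIdealLmc (vanishingIdealLmc a) := by
  refine ⟨isIdealLmc_vanishingIdealLmc a, fun h => ?_, fun J hJ hJne haJ =>
    (hJ.subset_vanishingIdealLmc hJne haJ).antisymm haJ⟩
  have : const S 1 ∈ vanishingIdealLmc a := h ▸ Lmc.const_mem 1
  simpa using this.2

lemma star_mul_self_add_star_mul_self_eq_zero_iff (z w : ℂ) :
    star z * z + star w * w = 0 ↔ z = 0 ∧ w = 0 := by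
  open ComplexOrder in
  rw [add_eq_zero_iff_of_nonneg (star_mul_self_nonneg z) (star_mul_self_nonneg w),
    CStarRing.star_mul_self_eq_zero_iff, CStarRing.star_mul_self_eq_zero_iff]

lemma isZFilter_zeroSetFamily_vanishingIdealLmc (a : S) :
    IsZFilter (zeroSetFamily (vanishingIdealLmc a)) where
  zero_sets := by
    rintro _ ⟨f, hf, rfl⟩
    exact ⟨f, hf.1, rfl⟩
  not_empty_mem := by
    rintro ⟨f, hf, hempty⟩
    exact (hempty ▸ hf.2 : a ∈ (∅ : Set S))
  univ_mem := ⟨0, ⟨Lmc.zero_mem, rfl⟩, by simp⟩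
  inter_mem := by
    rintro _ ⟨f, hf, rfl⟩ _ ⟨g, hg, rfl⟩
    refine ⟨star f * f + star g * g, ⟨Lmc.add_mem (Lmc.mul_mem (Lmc.star_mem hf.1) hf.1)
      (Lmc.mul_mem (Lmc.star_mem hg.1) hg.1), by simp [hf.2, hg.2]⟩, ?_⟩
    ext x
    exact (star_mul_self_add_star_mul_self_eq_zero_iff (f x) (g x)).symm
  superset_mem := by
    rintro _ ⟨f, hf, rfl⟩ B ⟨g, hg, rfl⟩ hfg
    exact ⟨g, ⟨hg, hfg hf.2⟩, rfl⟩

end VanishingIdeal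

section EFamily

variable {S : Type*} [TopologicalSpace S] [Mul S] [SemitopologicalSemigroup S]

lemma Efam_Einv_subset (𝒜 : Set (Set S)) : Efam (Einv 𝒜) ⊆ 𝒜 := by
  rintro _ ⟨f, hf, ε, hε, rfl⟩
  exact hf.2 ε hε

omit [Mul S] [SemitopologicalSemigroup S] in
lemma Eset_mem_nhds {f : S →ᵇ ℂ} {a : S} (ha : f a = 0) {ε : ℝ} (hε : 0 < ε) :
    Eset ε f ∈ 𝓝 a := by
  have : Metric.closedBall (0 : ℂ) ε ∈ 𝓝 (f a) := by
    rw [ha]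
    exact Metric.closedBall_mem_nhds 0 hε
  simpa [Eset, Set.preimage] using (map_continuous f).continuousAt.preimage_mem_nhds this

lemma apply_eq_zero_of_mem_Einv_zeroSetFamily {a : S} {f : S →ᵇ ℂ}
    (hf : f ∈ Einv (zeroSetFamily (vanishingIdealLmc a))) : f a = 0 := by
  have hsmall : ∀ ε > 0, ‖f a‖ ≤ ε := fun ε hε => by
    obtain ⟨g, hg, hEg⟩ := hf.2 ε hε
    exact (hEg ▸ hg.2 : a ∈ Eset ε f)
  exact norm_le_zero_iff.1 (le_of_forall_gt_imp_ge_of_dense hsmall)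

lemma singleton_notMem_Efam_Einv_zeroSetFamily {a : S} (ha : ¬IsOpen {a}) :
    {a} ∉ Efam (Einv (zeroSetFamily (vanishingIdealLmc a))) := by
  rintro ⟨f, hf, ε, hε, hEf⟩
  have : {a} ∈ 𝓝 a := hEf ▸ Eset_mem_nhds (apply_eq_zero_of_mem_Einv_zeroSetFamily hf) hε
  exact ha (isOpen_iff_mem_nhds.2 fun x hx => Set.mem_singleton_iff.1 hx ▸ this)

end EFamily

section Real

lemma lipschitzWith_lTrans_ofAdd {f : Multiplicative ℝ →ᵇ ℂ} {K : NNReal}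
    (hf : LipschitzWith K fun t : ℝ => f (Multiplicative.ofAdd t)) :
    LipschitzWith K fun s : ℝ => lTrans (Multiplicative.ofAdd s) f := by
  refine LipschitzWith.of_dist_le_mul fun s t => (dist_le (by positivity)).2 fun x => ?_
  simpa using hf.dist_le_mul (s + x.toAdd) (t + x.toAdd)

lemma mem_Lmc_of_lipschitzWith {f : Multiplicative ℝ →ᵇ ℂ} {K : NNReal}
    (hf : LipschitzWith K fun t : ℝ => f (Multiplicative.ofAdd t)) : f ∈ Lmc (Multiplicative ℝ) :=
  mem_Lmc_of_continuous_lTrans ((lipschitzWith_lTrans_ofAdd hf).continuous.comp continuous_toAdd)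

noncomputable def truncAbs : Multiplicative ℝ →ᵇ ℂ :=
  ofNormedAddCommGroup (fun x => ((min |x.toAdd| 1 : ℝ) : ℂ))
    (by fun_prop) 1 fun x => by
      rw [Complex.norm_real, Real.norm_of_nonneg (by positivity)]
      exact min_le_right _ _

lemma truncAbs_apply (x : Multiplicative ℝ) : truncAbs x = ((min |x.toAdd| 1 : ℝ) : ℂ) := rfl

lemma truncAbs_eq_zero_iff {x : Multiplicative ℝ} : truncAbs x = 0 ↔ x = 1 := by
  simp only [truncAbs_apply, Complex.ofReal_eq_zero, min_eq_iff, abs_eq_zero, toAdd_eq_zero]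
  constructor
  · rintro (⟨hx, -⟩ | ⟨h, -⟩)
    exacts [hx, absurd h one_ne_zero]
  · rintro rfl
    simp

lemma truncAbs_mem_Lmc : truncAbs ∈ Lmc (Multiplicative ℝ) := by
  have h := Complex.isometry_ofReal.lipschitz.comp ((lipschitzWith_one_norm (E := ℝ)).min_const 1)
  exact mem_Lmc_of_lipschitzWith h

lemma singleton_one_mem_zFilterA : ({1} : Set (Multiplicative ℝ)) ∈ zFilterA :=
  ⟨truncAbs, ⟨truncAbs_mem_Lmc, truncAbs_eq_zero_iff.2 rfl⟩,
    Set.ext fun _ => truncAbs_eq_zero_iff.symm⟩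

lemma not_isOpen_singleton_one : ¬IsOpen ({1} : Set (Multiplicative ℝ)) := fun h =>
  not_isOpen_singleton (0 : ℝ) <| by
    rw [show ({0} : Set ℝ) = Multiplicative.ofAdd ⁻¹' {1} by ext; simp]
    exact h.preimage continuous_ofAdd

end Real

theorem stmt6 :
    IsMaximalIdealLmc M₀ ∧ IsZFilter zFilterA ∧
    ({(1 : Multiplicative ℝ)} : Set (Multiplicative ℝ)) ∈ zFilterA ∧
    ({(1 : Multiplicative ℝ)} : Set (Multiplicative ℝ)) ∉ Efam (Einv zFilterA) ∧
    Efam (Einv zFilterA) ⊂ zFilterA := by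
  have hnotMem : ({1} : Set (Multiplicative ℝ)) ∉ Efam (Einv zFilterA) :=
    singleton_notMem_Efam_Einv_zeroSetFamily not_isOpen_singleton_one
  exact ⟨isMaximalIdealLmc_vanishingIdealLmc 1, isZFilter_zeroSetFamily_vanishingIdealLmc 1,
    singleton_one_mem_zFilterA, hnotMem,
    (Set.ssubset_iff_of_subset (Efam_Einv_subset _)).2 ⟨_, singleton_one_mem_zFilterA, hnotMem⟩⟩
end

section
/- If 𝒜 is any z-filter on Lmc(S), then E⁻(𝒜) = {f ∈ Lmc(S) : E_ε(f) ∈ 𝒜 for all ε > 0} is an e-ideal of Lmc(S). -/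
open scoped BoundedContinuousFunction
open WeakDual

/-! The one point that is not bookkeeping is that every `E_ε(f)` with `f ∈ Lmc S` is itself a
zero set of `Lmc S`, namely that of `(|f| - ε)⁺`: `Lmc S` is closed under the continuous functional
calculus, because left translations, characters and point evaluations are star-algebra
homomorphisms and therefore commute with it. Once the `E_ε(f)` are known to be zero sets, the
`z`-filter axioms and the inclusions `E_{ε/2}(f) ∩ E_{ε/2}(g) ⊆ E_ε(f + g)` and
`E_{ε/M}(g) ⊆ E_ε(fg)` (for `‖f‖ < M`) make `E⁻(𝒜)` an ideal, and `E⁻(E(E⁻(𝒜))) = E⁻(𝒜)`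
holds for any family `𝒜`. -/

section CfcPointwise

variable {A F : Type*} [CommCStarAlgebra A] [FunLike F A ℂ] [AlgHomClass F ℂ A ℂ]
  [StarHomClass F A ℂ]

lemma cfc_complex_eq (Φ : ℂ → ℂ) (z : ℂ) : cfc Φ z = Φ z := by
  simpa using cfc_algebraMap (A := ℂ) z Φ

lemma map_cfc_eq_comp (ψ : F) (hψ : Continuous ψ) {Φ : ℂ → ℂ} (hΦ : Continuous Φ) (a : A) :
    ψ (cfc Φ a) = Φ (ψ a) := by
  rw [StarAlgHomClass.map_cfc ψ Φ a hΦ.continuousOn hψ, cfc_complex_eq]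

end CfcPointwise

namespace BoundedContinuousFunction

variable {X : Type*} [TopologicalSpace X]

noncomputable def evalStarAlgHom (x : X) : (X →ᵇ ℂ) →⋆ₐ[ℂ] ℂ where
  toFun f := f x
  map_one' := rfl
  map_mul' _ _ := rfl
  map_zero' := rfl
  map_add' _ _ := rfl
  commutes' _ := rfl
  map_star' _ := rfl

lemma cfc_apply_eq {Φ : ℂ → ℂ} (hΦ : Continuous Φ) (f : X →ᵇ ℂ) (x : X) :
    cfc Φ f x = Φ (f x) :=
  map_cfc_eq_comp (evalStarAlgHom x) (continuous_eval_const x) hΦ f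

end BoundedContinuousFunction

section Eset

variable {S : Type*} [TopologicalSpace S]

lemma Eset_inter_subset_Eset_add (f g : S →ᵇ ℂ) (ε δ : ℝ) :
    Eset ε f ∩ Eset δ g ⊆ Eset (ε + δ) (f + g) := fun x ⟨hf, hg⟩ =>
  (norm_add_le (f x) (g x)).trans (add_le_add hf hg)

lemma Eset_subset_Eset_mul {f : S →ᵇ ℂ} {M : ℝ} (hM : ‖f‖ ≤ M) (g : S →ᵇ ℂ) (ε : ℝ) :
    Eset ε g ⊆ Eset (M * ε) (f * g) := fun x hx => by
  simp only [Eset, BoundedContinuousFunction.coe_mul, Pi.mul_apply, norm_mul] at hx ⊢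
  exact mul_le_mul ((f.norm_coe_le_norm x).trans hM) hx (norm_nonneg _)
    ((norm_nonneg f).trans hM)

end Eset

section Lmc

variable {S : Type*} [TopologicalSpace S] [Mul S] [SemitopologicalSemigroup S]

noncomputable def lTransStarAlgHom (s : S) : (S →ᵇ ℂ) →⋆ₐ[ℂ] (S →ᵇ ℂ) where
  toFun f := lTrans s f
  map_one' := rfl
  map_mul' _ _ := rfl
  map_zero' := rfl
  map_add' _ _ := rfl
  commutes' _ := rfl
  map_star' _ := rfl

lemma lTrans_cfc {Φ : ℂ → ℂ} (hΦ : Continuous Φ) (s : S) (f : S →ᵇ ℂ) :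
    lTrans s (cfc Φ f) = cfc Φ (lTrans s f) :=
  (lTransStarAlgHom s).map_cfc Φ f hΦ.continuousOn
    (BoundedContinuousFunction.continuous_compContinuous _)

lemma zero_mem_Lmc : (0 : S →ᵇ ℂ) ∈ Lmc S := fun μ =>
  continuous_const.congr fun _ => (map_zero μ).symm

lemma add_mem_Lmc {f g : S →ᵇ ℂ} (hf : f ∈ Lmc S) (hg : g ∈ Lmc S) : f + g ∈ Lmc S := fun μ =>
  ((hf μ).add (hg μ)).congr fun s => (map_add μ (lTrans s f) (lTrans s g)).symm

lemma mul_mem_Lmc {f g : S →ᵇ ℂ} (hf : f ∈ Lmc S) (hg : g ∈ Lmc S) : f * g ∈ Lmc S := fun μ =>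
  ((hf μ).mul (hg μ)).congr fun s => (map_mul μ (lTrans s f) (lTrans s g)).symm

lemma cfc_mem_Lmc {Φ : ℂ → ℂ} (hΦ : Continuous Φ) {f : S →ᵇ ℂ} (hf : f ∈ Lmc S) :
    cfc Φ f ∈ Lmc S := fun μ =>
  (hΦ.comp (hf μ)).congr fun s => by
    rw [Function.comp_apply, lTrans_cfc hΦ, map_cfc_eq_comp μ (map_continuous μ) hΦ]

lemma isZeroSet_Eset {f : S →ᵇ ℂ} (hf : f ∈ Lmc S) (ε : ℝ) : IsZeroSet (Eset ε f) := by
  have hΦ : Continuous fun z : ℂ => (((‖z‖ - ε) ⊔ 0 : ℝ) : ℂ) := by fun_prop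
  refine ⟨_, cfc_mem_Lmc hΦ hf, ?_⟩
  ext x
  simp [Eset, BoundedContinuousFunction.cfc_apply_eq hΦ]

variable {𝒜 : Set (Set S)}

lemma IsZFilter.Eset_mem_of_subset (h𝒜 : IsZFilter 𝒜) {A : Set S} (hA : A ∈ 𝒜)
    {f : S →ᵇ ℂ} (hf : f ∈ Lmc S) {ε : ℝ} (hAf : A ⊆ Eset ε f) : Eset ε f ∈ 𝒜 :=
  h𝒜.superset_mem A hA _ (isZeroSet_Eset hf ε) hAf

lemma IsZFilter.isIdealLmc_Einv (h𝒜 : IsZFilter 𝒜) : IsIdealLmc (Einv 𝒜) where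
  subset_lmc _ hf := hf.1
  zero_mem := ⟨zero_mem_Lmc, fun ε hε =>
    h𝒜.Eset_mem_of_subset h𝒜.univ_mem zero_mem_Lmc fun x _ => by simpa [Eset] using hε.le⟩
  add_mem f hf g hg := ⟨add_mem_Lmc hf.1 hg.1, fun ε hε => by
    have hfg := h𝒜.inter_mem _ (hf.2 (ε / 2) (by positivity)) _ (hg.2 (ε / 2) (by positivity))
    refine h𝒜.Eset_mem_of_subset hfg (add_mem_Lmc hf.1 hg.1) ?_
    simpa using Eset_inter_subset_Eset_add f g (ε / 2) (ε / 2)⟩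
  mul_mem f hf g hg := ⟨mul_mem_Lmc hf hg.1, fun ε hε => by
    have hM : 0 < ‖f‖ + 1 := by positivity
    refine h𝒜.Eset_mem_of_subset (hg.2 (ε / (‖f‖ + 1)) (by positivity)) (mul_mem_Lmc hf hg.1) ?_
    simpa [mul_div_cancel₀ ε hM.ne'] using
      Eset_subset_Eset_mul (f := f) (le_add_of_nonneg_right zero_le_one) g (ε / (‖f‖ + 1))⟩

lemma Einv_Efam_Einv (𝒜 : Set (Set S)) : Einv (Efam (Einv 𝒜)) = Einv 𝒜 := by
  ext f
  refine ⟨fun ⟨hf, hE⟩ => ⟨hf, fun ε hε => ?_⟩, fun hf => ⟨hf.1, fun ε hε => ⟨f, hf, ε, hε, rfl⟩⟩⟩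
  obtain ⟨g, hg, δ, hδ, hεδ⟩ := hE ε hε
  exact hεδ ▸ hg.2 δ hδ

end Lmc

theorem stmt10_general {S : Type*} [TopologicalSpace S] [Semigroup S]
    [SemitopologicalSemigroup S] (𝒜 : Set (Set S)) (h𝒜 : IsZFilter 𝒜) :
    IsEIdeal (Einv 𝒜) :=
  ⟨h𝒜.isIdealLmc_Einv, Einv_Efam_Einv 𝒜⟩

theorem stmt10 {S : Type*} [TopologicalSpace S] [T2Space S] [Semigroup S]
    [SemitopologicalSemigroup S] (𝒜 : Set (Set S)) (h𝒜 : IsZFilter 𝒜) :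
    IsEIdeal (Einv 𝒜) :=
  stmt10_general 𝒜 h𝒜
end
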